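/- As the side lengths of a spherical triangle shrink to zero, the spherical Heron formula degenerates to the Euclidean Heron formula: if a, b, c are fixed positive reals satisfying the strict triangle inequality and E(t) denotes the spherical excess of the spherical triangle with sides ta, tb, tc on the unit sphere, then lim_{t→0⁺} E(t)/t² = sqrt(s(s−a)(s−b)(s−c)) where s = (a+b+c)/2. -/

import Mathlib

/-!
For small `t` each factor `tan (t x / 2)` is `t x / 2 + o(t)`, so the radicand of L'Huilier's
formula is `t⁴ s(s-a)(s-b)(s-c) / 16 + o(t⁴)`; its square root is `t²` times the Euclidean Heron
area over `4`, and `4 arctan u ~ 4 u` turns this into `E t ~ t²` times that area.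
-/

open Filter Topology

-- `f (u x) = u x * dslope f 0 (u x)` holds even where `u x = 0`, and `dslope f 0` is continuous
-- at `0`; so no nonvanishing of `u` is needed.
theorem HasDerivAt.tendsto_comp_div {𝕜 α : Type*} [NontriviallyNormedField 𝕜]
    {f : 𝕜 → 𝕜} {f' L : 𝕜} {l : Filter α} {u v : α → 𝕜}
    (hf : HasDerivAt f f' 0) (hf0 : f 0 = 0)
    (huv : Tendsto (fun x => u x / v x) l (𝓝 L)) (hv : Tendsto v l (𝓝[≠] 0)) :
    Tendsto (fun x => f (u x) / v x) l (𝓝 (f' * L)) := by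
  have hu : Tendsto u l (𝓝 0) := by
    have h := huv.mul (tendsto_nhdsWithin_iff.1 hv).1
    rw [mul_zero] at h
    refine h.congr' ?_
    filter_upwards [(tendsto_nhdsWithin_iff.1 hv).2] with x hx
    exact div_mul_cancel₀ _ hx
  have hslope : Tendsto (dslope f 0) (𝓝 0) (𝓝 f') := by
    simpa only [dslope_same, hf.deriv] using
      (continuousAt_dslope_same.2 hf.differentiableAt).tendsto
  refine ((hslope.comp hu).mul huv).congr fun x => ?_
  have h := sub_smul_dslope f 0 (u x)
  rw [sub_zero, hf0, sub_zero, smul_eq_mul] at h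
  rw [Function.comp_apply, ← h, mul_div_assoc', mul_comm]

theorem Real.tendsto_tan_mul_div_two_div_self (x : ℝ) :
    Tendsto (fun t => Real.tan (t * x / 2) / t) (𝓝[≠] 0) (𝓝 (x / 2)) := by
  have htan : HasDerivAt Real.tan 1 0 := by
    simpa using Real.hasDerivAt_tan (x := 0) (by simp)
  have hratio : Tendsto (fun t : ℝ => t * x / 2 / t) (𝓝[≠] 0) (𝓝 (x / 2)) := by
    refine tendsto_const_nhds.congr' ?_
    filter_upwards [self_mem_nhdsWithin] with t (ht : t ≠ 0)
    field_simp
  simpa using htan.tendsto_comp_div Real.tan_zero hratio tendsto_id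

theorem tendsto_sq_nhdsGT_zero_nhdsNE_zero :
    Tendsto (fun t : ℝ => t ^ 2) (𝓝[>] 0) (𝓝[≠] 0) := by
  refine tendsto_nhdsWithin_iff.2 ⟨?_, ?_⟩
  · simpa using ((continuous_pow 2).tendsto (0 : ℝ)).mono_left nhdsWithin_le_nhds
  · filter_upwards [self_mem_nhdsWithin] with t (ht : 0 < t)
    exact pow_ne_zero 2 ht.ne'

theorem spherical_heron_degenerates (a b c : ℝ)
    (s : ℝ)
    (E : ℝ → ℝ)
    (hE : ∀ t, E t = 4 * Real.arctan (Real.sqrt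
      (Real.tan (t * s / 2) * Real.tan (t * (s - a) / 2) *
        Real.tan (t * (s - b) / 2) * Real.tan (t * (s - c) / 2)))) :
    Filter.Tendsto (fun t => E t / t ^ 2) (nhdsWithin 0 (Set.Ioi 0))
      (nhds (Real.sqrt (s * (s - a) * (s - b) * (s - c)))) := by
  set Q : ℝ → ℝ := fun t => Real.tan (t * s / 2) * Real.tan (t * (s - a) / 2) *
    Real.tan (t * (s - b) / 2) * Real.tan (t * (s - c) / 2)
  have hQ : Tendsto (fun t => Q t / t ^ 4) (𝓝[>] 0)
      (𝓝 (s * (s - a) * (s - b) * (s - c) / 16)) := by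
    have h := ((((Real.tendsto_tan_mul_div_two_div_self s).mul
      (Real.tendsto_tan_mul_div_two_div_self (s - a))).mul
      (Real.tendsto_tan_mul_div_two_div_self (s - b))).mul
      (Real.tendsto_tan_mul_div_two_div_self (s - c))).mono_left
      (nhdsWithin_mono 0 fun t (ht : t ∈ Set.Ioi 0) => ne_of_gt ht)
    convert h using 2 with t
    · simp only [Q]
      field_simp
    · ring
  have hsqrtQ : Tendsto (fun t => Real.sqrt (Q t) / t ^ 2) (𝓝[>] 0)
      (𝓝 (Real.sqrt (s * (s - a) * (s - b) * (s - c)) / 4)) := by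
    convert (Real.continuous_sqrt.tendsto _).comp hQ using 1
    · ext t
      rw [Function.comp_apply, Real.sqrt_div' _ (by positivity),
        show t ^ 4 = (t ^ 2) ^ 2 by ring, Real.sqrt_sq (by positivity)]
    · rw [Real.sqrt_div' _ (by norm_num), show (16 : ℝ) = 4 ^ 2 by norm_num,
        Real.sqrt_sq (by norm_num)]
  have harctan : HasDerivAt Real.arctan 1 0 := by
    simpa using Real.hasDerivAt_arctan 0
  have h := (harctan.tendsto_comp_div Real.arctan_zero hsqrtQ
    tendsto_sq_nhdsGT_zero_nhdsNE_zero).const_mul 4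
  convert h using 2 with t
  · rw [hE, mul_div_assoc]
  · ring
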